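/- A pair (Φ, Θ) with Φ ∈ K, Θ ∈ ℝ^n solves the algebraic saddle point problem (⟨AΦ + BᵀΘ − F, V − Φ⟩ ≥ 0 for all V ∈ K and BΦ − CΘ = G) if and only if Θ is a global minimizer of the dual functional h over ℝ^n and Φ = Φ(Θ). -/

import Mathlib

/-! For `g = F − BᵀW` the energy `J_g(V) = ½⟨AV, V⟩ − ⟨g, V⟩` is strictly convex, so on the
convex set `K` its minimizer is unique and is characterized by the variational inequality
`⟨AΦ − g, V − Φ⟩ ≥ 0`; moreover `L(V, W) = J_{F − BᵀW}(V) − ⟨G, W⟩ − ½⟨CW, W⟩`. Hence the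
variational inequality of the saddle point problem says `Φ = Φ(Θ)`, and then
`h(W) ≥ −L(Φ, W) ≥ −L(Φ, Θ) = h(Θ)` since `L(Φ, ·)` is concave with gradient
`BΦ − CΘ − G = 0` at `Θ`.

Conversely put `R = BΦ − CΘ − G` and `W = Θ + tR`. Strong convexity of `J` and completing the
square with `Au = −BᵀR` give `L(V, W) ≥ L(Φ, Θ) + t‖R‖² − O(t²)` for every `V ∈ K`, so
`h(W) < h(Θ)` for small `t > 0` unless `R = 0`. -/

open scoped RealInnerProductSpace

/-- The Lagrangian `L(V, W) = ½⟨AV, V⟩ − ⟨F, V⟩ + ⟨BV − G, W⟩ − ½⟨CW, W⟩`. -/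
noncomputable def Lag {m n : ℕ}
    (A : EuclideanSpace ℝ (Fin m) →L[ℝ] EuclideanSpace ℝ (Fin m))
    (B : EuclideanSpace ℝ (Fin m) →L[ℝ] EuclideanSpace ℝ (Fin n))
    (C : EuclideanSpace ℝ (Fin n) →L[ℝ] EuclideanSpace ℝ (Fin n))
    (F : EuclideanSpace ℝ (Fin m)) (G : EuclideanSpace ℝ (Fin n))
    (V : EuclideanSpace ℝ (Fin m)) (W : EuclideanSpace ℝ (Fin n)) : ℝ :=
  (1 / 2 : ℝ) * ⟪A V, V⟫ - ⟪F, V⟫ + ⟪B V - G, W⟫ - (1 / 2 : ℝ) * ⟪C W, W⟫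

open Set Filter Topology
open scoped InnerProduct

lemma nonpos_of_forall_mul_le_sq_mul {a b : ℝ} (h : ∀ t ∈ Ioc (0 : ℝ) 1, t * a ≤ t ^ 2 * b) :
    a ≤ 0 := by
  have hlim : Tendsto (fun t : ℝ => t * b) (𝓝[>] 0) (𝓝 0) :=
    ((continuous_mul_const b).tendsto' 0 0 (zero_mul b)).mono_left nhdsWithin_le_nhds
  refine ge_of_tendsto hlim ?_
  filter_upwards [Ioo_mem_nhdsGT one_pos] with t ht
  have := h t ⟨ht.1, ht.2.le⟩
  nlinarith [ht.1]

section QuadEnergy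

variable {E : Type*} [NormedAddCommGroup E] [InnerProductSpace ℝ E] {A : E →L[ℝ] E} {g : E}

lemma inner_apply_self_nonneg (hApos : ∀ x, x ≠ 0 → 0 < ⟪A x, x⟫) (x : E) : 0 ≤ ⟪A x, x⟫ := by
  rcases eq_or_ne x 0 with rfl | hx
  · simp
  · exact (hApos x hx).le

noncomputable def quadEnergy (A : E →L[ℝ] E) (g V : E) : ℝ := (1 / 2 : ℝ) * ⟪A V, V⟫ - ⟪g, V⟫

lemma quadEnergy_sub_quadEnergy (hA : (A : E →ₗ[ℝ] E).IsSymmetric) (U V : E) :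
    quadEnergy A g V - quadEnergy A g U =
      ⟪A U - g, V - U⟫ + (1 / 2 : ℝ) * ⟪A (V - U), V - U⟫ := by
  have hUV : ⟪A V, U⟫ = ⟪A U, V⟫ := (hA V U).trans (real_inner_comm _ _)
  simp only [quadEnergy, map_sub, inner_sub_left, inner_sub_right]
  rw [hUV]; ring

lemma inner_sub_nonneg_of_isMinOn {K : Set E} (hA : (A : E →ₗ[ℝ] E).IsSymmetric)
    (hK : Convex ℝ K) {Φ : E} (hΦ : Φ ∈ K) (hmin : IsMinOn (quadEnergy A g) K Φ) :
    ∀ V ∈ K, 0 ≤ ⟪A Φ - g, V - Φ⟫ := by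
  intro V hV
  suffices -⟪A Φ - g, V - Φ⟫ ≤ 0 by linarith
  refine nonpos_of_forall_mul_le_sq_mul (b := (1 / 2 : ℝ) * ⟪A (V - Φ), V - Φ⟫) fun t ht => ?_
  have hmem : Φ + t • (V - Φ) ∈ K := hK.add_smul_sub_mem hΦ hV ⟨ht.1.le, ht.2⟩
  have := quadEnergy_sub_quadEnergy (g := g) hA Φ (Φ + t • (V - Φ))
  simp only [add_sub_cancel_left, map_smul, inner_smul_left, inner_smul_right,
    RCLike.conj_to_real] at this
  linarith [isMinOn_iff.mp hmin _ hmem]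

lemma quadEnergy_add_le_of_inner_nonneg (hA : (A : E →ₗ[ℝ] E).IsSymmetric) {Φ V : E}
    (hVI : 0 ≤ ⟪A Φ - g, V - Φ⟫) :
    quadEnergy A g Φ + (1 / 2 : ℝ) * ⟪A (V - Φ), V - Φ⟫ ≤ quadEnergy A g V := by
  linarith [quadEnergy_sub_quadEnergy (g := g) hA Φ V]

lemma isMinOn_univ_quadEnergy (hA : (A : E →ₗ[ℝ] E).IsSymmetric)
    (hAnonneg : ∀ x, 0 ≤ ⟪A x, x⟫) {u : E} (hu : A u = g) :
    IsMinOn (quadEnergy A g) univ u := by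
  refine isMinOn_univ_iff.mpr fun V => ?_
  have := quadEnergy_add_le_of_inner_nonneg (V := V) hA (by simp [hu] : 0 ≤ ⟪A u - g, V - u⟫)
  linarith [hAnonneg (V - u)]

lemma eq_of_isMinOn_of_inner_nonneg {K : Set E} (hA : (A : E →ₗ[ℝ] E).IsSymmetric)
    (hApos : ∀ x, x ≠ 0 → 0 < ⟪A x, x⟫) {Φ U : E} (hΦ : Φ ∈ K)
    (hVI : ∀ V ∈ K, 0 ≤ ⟪A Φ - g, V - Φ⟫) (hU : U ∈ K) (hmin : IsMinOn (quadEnergy A g) K U) :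
    U = Φ := by
  by_contra hne
  have := quadEnergy_add_le_of_inner_nonneg hA (hVI U hU)
  linarith [isMinOn_iff.mp hmin _ hΦ, hApos _ (sub_ne_zero.mpr hne)]

lemma surjective_of_inner_pos [FiniteDimensional ℝ E] (hApos : ∀ x, x ≠ 0 → 0 < ⟪A x, x⟫) :
    Function.Surjective A := by
  refine LinearMap.injective_iff_surjective (f := (A : E →ₗ[ℝ] E)).mp ?_
  refine (injective_iff_map_eq_zero _).mpr fun x hx => ?_
  by_contra hne
  have := hApos x hne
  rw [show A x = 0 from hx, inner_zero_left] at this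
  exact lt_irrefl _ this

end QuadEnergy

section Lagrangian

variable {m n : ℕ} {A : EuclideanSpace ℝ (Fin m) →L[ℝ] EuclideanSpace ℝ (Fin m)}
  {B : EuclideanSpace ℝ (Fin m) →L[ℝ] EuclideanSpace ℝ (Fin n)}
  {C : EuclideanSpace ℝ (Fin n) →L[ℝ] EuclideanSpace ℝ (Fin n)}
  {F : EuclideanSpace ℝ (Fin m)} {G : EuclideanSpace ℝ (Fin n)}

lemma Lag_eq_quadEnergy (V : EuclideanSpace ℝ (Fin m)) (W : EuclideanSpace ℝ (Fin n)) :
    Lag A B C F G V W = quadEnergy A (F - (B†) W) V - ⟪G, W⟫ - (1 / 2 : ℝ) * ⟪C W, W⟫ := by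
  simp only [Lag, quadEnergy, inner_sub_left, ContinuousLinearMap.adjoint_inner_left]
  rw [real_inner_comm W (B V)]
  ring

lemma Lag_sub_Lag (hC : (C : EuclideanSpace ℝ (Fin n) →ₗ[ℝ] _).IsSymmetric)
    (V : EuclideanSpace ℝ (Fin m)) (W Θ : EuclideanSpace ℝ (Fin n)) :
    Lag A B C F G V W - Lag A B C F G V Θ =
      ⟪B V - C Θ - G, W - Θ⟫ - (1 / 2 : ℝ) * ⟪C (W - Θ), W - Θ⟫ := by
  have hWΘ : ⟪C W, Θ⟫ = ⟪C Θ, W⟫ := (hC W Θ).trans (real_inner_comm _ _)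
  simp only [Lag, map_sub, inner_sub_left, inner_sub_right]
  rw [hWΘ]; ring

lemma Lag_le_Lag_of_isMinOn {K : Set (EuclideanSpace ℝ (Fin m))} {W : EuclideanSpace ℝ (Fin n)}
    {U V : EuclideanSpace ℝ (Fin m)} (hU : IsMinOn (quadEnergy A (F - (B†) W)) K U) (hV : V ∈ K) :
    Lag A B C F G U W ≤ Lag A B C F G V W := by
  rw [Lag_eq_quadEnergy, Lag_eq_quadEnergy]
  linarith [isMinOn_iff.mp hU V hV]

lemma Lag_le_of_apply_sub_apply_eq (hC : (C : EuclideanSpace ℝ (Fin n) →ₗ[ℝ] _).IsSymmetric)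
    (hCnonneg : ∀ x, 0 ≤ ⟪C x, x⟫) {Φ : EuclideanSpace ℝ (Fin m)} {Θ : EuclideanSpace ℝ (Fin n)}
    (hBC : B Φ - C Θ = G) (W : EuclideanSpace ℝ (Fin n)) :
    Lag A B C F G Φ W ≤ Lag A B C F G Φ Θ := by
  have := Lag_sub_Lag (A := A) (B := B) (F := F) (G := G) hC Φ W Θ
  rw [hBC, sub_self, inner_zero_left] at this
  linarith [hCnonneg (W - Θ)]

lemma apply_sub_apply_eq_of_forall_exists_Lag_le
    (hA : (A : EuclideanSpace ℝ (Fin m) →ₗ[ℝ] _).IsSymmetric) (hApos : ∀ x, x ≠ 0 → 0 < ⟪A x, x⟫)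
    (hC : (C : EuclideanSpace ℝ (Fin n) →ₗ[ℝ] _).IsSymmetric) {K : Set (EuclideanSpace ℝ (Fin m))}
    {Φ : EuclideanSpace ℝ (Fin m)} {Θ : EuclideanSpace ℝ (Fin n)}
    (hVI : ∀ V ∈ K, 0 ≤ ⟪A Φ - (F - (B†) Θ), V - Φ⟫)
    (hlow : ∀ W, ∃ V ∈ K, Lag A B C F G V W ≤ Lag A B C F G Φ Θ) :
    B Φ - C Θ = G := by
  set R := B Φ - C Θ - G
  obtain ⟨u, hu⟩ := surjective_of_inner_pos hApos (-(B†) R)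
  suffices ⟪R, R⟫ ≤ 0 from
    sub_eq_zero.mp (inner_self_eq_zero.mp (le_antisymm this real_inner_self_nonneg))
  refine nonpos_of_forall_mul_le_sq_mul
    (b := (1 / 2 : ℝ) * (⟪C R, R⟫ + ⟪A u, u⟫)) fun t ht => ?_
  obtain ⟨V, hV, hVle⟩ := hlow (Θ + t • R)
  set e := V - Φ
  have hshift : Lag A B C F G V (Θ + t • R) - Lag A B C F G V Θ =
      t * ⟪R, R⟫ + t * ⟪B e, R⟫ - t ^ 2 / 2 * ⟪C R, R⟫ := by
    have hres : B V - C Θ - G = R + B e := by simp only [R, e, map_sub]; abel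
    rw [Lag_sub_Lag hC, add_sub_cancel_left, hres]
    simp only [map_smul, inner_smul_left, inner_smul_right, inner_add_left, RCLike.conj_to_real]
    ring
  have hstrong : Lag A B C F G Φ Θ + (1 / 2 : ℝ) * ⟪A e, e⟫ ≤ Lag A B C F G V Θ := by
    rw [Lag_eq_quadEnergy, Lag_eq_quadEnergy]
    linarith [quadEnergy_add_le_of_inner_nonneg hA (hVI V hV)]
  have hsquare : -(t ^ 2 / 2) * ⟪A u, u⟫ ≤ (1 / 2 : ℝ) * ⟪A e, e⟫ + t * ⟪B e, R⟫ := by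
    have hBe : ⟪B e, R⟫ = -⟪A u, e⟫ := by
      rw [hu, inner_neg_left, neg_neg, ContinuousLinearMap.adjoint_inner_left, real_inner_comm]
    have := isMinOn_univ_iff.mp
      (isMinOn_univ_quadEnergy hA (inner_apply_self_nonneg hApos) (map_smul A t u)) e
    simp only [quadEnergy, map_smul, inner_smul_left, inner_smul_right,
      RCLike.conj_to_real] at this
    rw [hBe]
    linear_combination this
  linarith

end Lagrangian

theorem stmt_2 {m n : ℕ}
    (A : EuclideanSpace ℝ (Fin m) →L[ℝ] EuclideanSpace ℝ (Fin m))
    (hAsym : ∀ x y : EuclideanSpace ℝ (Fin m), ⟪A x, y⟫ = ⟪x, A y⟫)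
    (hApos : ∀ x : EuclideanSpace ℝ (Fin m), x ≠ 0 → 0 < ⟪A x, x⟫)
    (B : EuclideanSpace ℝ (Fin m) →L[ℝ] EuclideanSpace ℝ (Fin n))
    (C : EuclideanSpace ℝ (Fin n) →L[ℝ] EuclideanSpace ℝ (Fin n))
    (hCsym : ∀ x y : EuclideanSpace ℝ (Fin n), ⟪C x, y⟫ = ⟪x, C y⟫)
    (hCpos : ∀ x : EuclideanSpace ℝ (Fin n), x ≠ 0 → 0 < ⟪C x, x⟫)
    (F : EuclideanSpace ℝ (Fin m)) (G : EuclideanSpace ℝ (Fin n))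
    (K : Set (EuclideanSpace ℝ (Fin m)))
    (hKco : Convex ℝ K)
    -- `Phi W` is the minimizer over `K` of `V ↦ ½⟨AV, V⟩ − ⟨F − BᵀW, V⟩`
    (Phi : EuclideanSpace ℝ (Fin n) → EuclideanSpace ℝ (Fin m))
    (hPhi : ∀ W : EuclideanSpace ℝ (Fin n), Phi W ∈ K ∧ ∀ V ∈ K,
      (1 / 2 : ℝ) * ⟪A (Phi W), Phi W⟫ - ⟪F - (ContinuousLinearMap.adjoint B) W, Phi W⟫ ≤
        (1 / 2 : ℝ) * ⟪A V, V⟫ - ⟪F - (ContinuousLinearMap.adjoint B) W, V⟫)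
    -- the dual functional `h(W) = −L(Φ(W), W)`
    (h : EuclideanSpace ℝ (Fin n) → ℝ)
    (hdual : ∀ W : EuclideanSpace ℝ (Fin n), h W = -Lag A B C F G (Phi W) W)
    (Φ : EuclideanSpace ℝ (Fin m)) (Θ : EuclideanSpace ℝ (Fin n)) :
    (Φ ∈ K ∧
        (∀ V ∈ K, 0 ≤ ⟪A Φ + (ContinuousLinearMap.adjoint B) Θ - F, V - Φ⟫) ∧
        B Φ - C Θ = G) ↔
      ((∀ W : EuclideanSpace ℝ (Fin n), h Θ ≤ h W) ∧ Φ = Phi Θ) := by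
  have hmin : ∀ W, IsMinOn (quadEnergy A (F - (B†) W)) K (Phi W) :=
    fun W => isMinOn_iff.mpr (hPhi W).2
  simp only [← sub_sub_eq_add_sub (A Φ)]
  constructor
  · rintro ⟨hΦ, hVI, hBC⟩
    have hPhiΘ : Phi Θ = Φ :=
      eq_of_isMinOn_of_inner_nonneg hAsym hApos hΦ hVI (hPhi Θ).1 (hmin Θ)
    refine ⟨fun W => ?_, hPhiΘ.symm⟩
    rw [hdual, hdual, hPhiΘ, neg_le_neg_iff]
    exact (Lag_le_Lag_of_isMinOn (hmin W) hΦ).trans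
      (Lag_le_of_apply_sub_apply_eq hCsym (inner_apply_self_nonneg hCpos) hBC W)
  · rintro ⟨hΘ, rfl⟩
    have hVI := inner_sub_nonneg_of_isMinOn hAsym hKco (hPhi Θ).1 (hmin Θ)
    refine ⟨(hPhi Θ).1, hVI, apply_sub_apply_eq_of_forall_exists_Lag_le hAsym hApos hCsym hVI
      fun W => ⟨Phi W, (hPhi W).1, ?_⟩⟩
    simpa only [hdual, neg_le_neg_iff] using hΘ W
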